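/- arXiv:0811.1748 — 4 statements merged into one kernel-verified Lean document; each statement's English description precedes it below -/
import Mathlib

section
/- Let K be a nonempty compact convex subset of ℝ³ contained in [0,∞)³, whose points are written μ = (μ⁻, μ⁰, μ⁺). Then inf_{λ>0} sup_{μ∈K} (λ·μ⁺ + μ⁰ + λ⁻¹·μ⁻) = sup_{μ∈K} inf_{λ>0} (λ·μ⁺ + μ⁰ + λ⁻¹·μ⁻) = sup_{μ∈K} (μ⁰ + 2·√(μ⁺·μ⁻)). -/
/-!
For fixed `μ`, AM-GM gives `F(λ, μ) ≥ G μ := μ⁰ + 2√(μ⁺μ⁻)` with equality at `λ = √(μ⁻/μ⁺)`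
when `μ⁻, μ⁺ > 0`; hence `sup_K G ≤ inf_λ sup_K F`. Conversely, if the continuous function `G`
attains its maximum on `K` at a point `μ*` with `μ*⁻, μ*⁺ > 0`, then the derivative of `G` at
`μ*` is the linear form `F(λ*, ·)` with `λ* = √(μ*⁻/μ*⁺)`, and first-order optimality on the
convex set `K` gives `F(λ*, ν) ≤ F(λ*, μ*) = G μ*` for every `ν ∈ K`: `(λ*, μ*)` is a saddle
point. The general case follows by translating `K` by `(η, 0, η)` and letting `η → 0`. The
inner infimum is the case of a singleton `K = {μ}`.
-/

open Real Set Filter Topology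

namespace ExtinctionMinimax

lemma sqrt_add_le_sqrt_add_sqrt {x y : ℝ} (hx : 0 ≤ x) (hy : 0 ≤ y) : √(x + y) ≤ √x + √y := by
  rw [sqrt_le_left (by positivity), add_sq, sq_sqrt hx, sq_sqrt hy]
  nlinarith [sqrt_nonneg x, sqrt_nonneg y]

noncomputable def F (l : ℝ) (μ : ℝ × ℝ × ℝ) : ℝ := l * μ.2.2 + μ.2.1 + l⁻¹ * μ.1

noncomputable def G (μ : ℝ × ℝ × ℝ) : ℝ := μ.2.1 + 2 * √(μ.2.2 * μ.1)

noncomputable def minimaxValue (K : Set (ℝ × ℝ × ℝ)) : ℝ :=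
  sInf {y : ℝ | ∃ l : ℝ, 0 < l ∧ y = sSup (F l '' K)}

/-- The minimiser `√(μ⁻ / μ⁺)` of `F · μ`, written to avoid the square root of a quotient. -/
noncomputable def argminF (μ : ℝ × ℝ × ℝ) : ℝ := √(μ.2.2 * μ.1) / μ.2.2

lemma argminF_pos {μ : ℝ × ℝ × ℝ} (hc : 0 < μ.1) (ha : 0 < μ.2.2) : 0 < argminF μ :=
  div_pos (sqrt_pos.2 (mul_pos ha hc)) ha

lemma continuous_F (l : ℝ) : Continuous (F l) := by
  unfold F; fun_prop

lemma continuous_G : Continuous G := by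
  unfold G; fun_prop

lemma F_sub (l : ℝ) (μ ν : ℝ × ℝ × ℝ) : F l (ν - μ) = F l ν - F l μ := by
  simp only [F, Prod.fst_sub, Prod.snd_sub]
  ring

lemma F_le_F_add {l η : ℝ} (hl : 0 < l) (hη : 0 ≤ η) (μ : ℝ × ℝ × ℝ) :
    F l μ ≤ F l ((η, 0, η) + μ) := by
  simp only [F, Prod.fst_add, Prod.snd_add]
  nlinarith [mul_nonneg hl.le hη, mul_nonneg (inv_pos.2 hl).le hη]

lemma G_le_F {l : ℝ} (hl : 0 < l) {μ : ℝ × ℝ × ℝ} (hc : 0 ≤ μ.1) (ha : 0 ≤ μ.2.2) :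
    G μ ≤ F l μ := by
  have hsplit : √(μ.2.2 * μ.1) = √(l * μ.2.2) * √(l⁻¹ * μ.1) := by
    rw [← sqrt_mul (by positivity)]
    congr 1
    field_simp
  have := two_mul_le_add_sq (√(l * μ.2.2)) (√(l⁻¹ * μ.1))
  rw [sq_sqrt (by positivity), sq_sqrt (by positivity)] at this
  simp only [F, G, hsplit]
  linarith

lemma F_argminF {μ : ℝ × ℝ × ℝ} (hc : 0 < μ.1) (ha : 0 < μ.2.2) : F (argminF μ) μ = G μ := by
  have hs2 : √(μ.2.2 * μ.1) ^ 2 = μ.2.2 * μ.1 := sq_sqrt (mul_pos ha hc).le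
  simp only [F, G, argminF, inv_div]
  field_simp
  linear_combination -hs2

lemma G_add_le {η : ℝ} (hη : 0 ≤ η) {μ : ℝ × ℝ × ℝ} (hc : 0 ≤ μ.1) (ha : 0 ≤ μ.2.2) :
    G ((η, 0, η) + μ) ≤ G μ + 2 * √(η * (μ.1 + μ.2.2 + η)) := by
  have hexpand : (η + μ.2.2) * (η + μ.1) = μ.2.2 * μ.1 + η * (μ.1 + μ.2.2 + η) := by ring
  have := sqrt_add_le_sqrt_add_sqrt (mul_nonneg ha hc)
    (mul_nonneg hη (by positivity : 0 ≤ μ.1 + μ.2.2 + η))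
  simp only [G, Prod.fst_add, Prod.snd_add, zero_add, hexpand]
  linarith

lemma hasFDerivAt_G {μ : ℝ × ℝ × ℝ} (hc : 0 < μ.1) (ha : 0 < μ.2.2) :
    ∃ G' : (ℝ × ℝ × ℝ) →L[ℝ] ℝ, HasFDerivAt G G' μ ∧ ∀ v, G' v = F (argminF μ) v := by
  have hfst : HasFDerivAt (fun ν : ℝ × ℝ × ℝ => ν.1) (ContinuousLinearMap.fst ℝ ℝ (ℝ × ℝ)) μ :=
    hasFDerivAt_fst
  have hprod := ((hasFDerivAt_snd (p := μ) (𝕜 := ℝ)).snd).mul hfst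
  refine ⟨_, (hasFDerivAt_snd.fst).add ((hprod.sqrt (mul_pos ha hc).ne').const_mul 2),
    fun v => ?_⟩
  have hs2 : √(μ.2.2 * μ.1) ^ 2 = μ.2.2 * μ.1 := sq_sqrt (mul_pos ha hc).le
  simp only [Pi.mul_apply, smul_add, add_apply,
    ContinuousLinearMap.comp_apply, ContinuousLinearMap.coe_snd', ContinuousLinearMap.coe_fst',
    smul_apply, smul_eq_mul, F, argminF, inv_div]
  field_simp
  linear_combination (-v.2.2) * hs2

lemma F_le_G_of_isMaxOn {K : Set (ℝ × ℝ × ℝ)} (hconv : Convex ℝ K) {μ ν : ℝ × ℝ × ℝ}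
    (hμ : μ ∈ K) (hν : ν ∈ K) (hmax : IsMaxOn G K μ) (hc : 0 < μ.1) (ha : 0 < μ.2.2) :
    F (argminF μ) ν ≤ G μ := by
  obtain ⟨G', hG', hG'F⟩ := hasFDerivAt_G hc ha
  have := hmax.localize.hasFDerivWithinAt_nonpos hG'.hasFDerivWithinAt
    (sub_mem_posTangentConeAt_of_segment_subset (hconv.segment_subset hμ hν))
  rw [hG'F, F_sub, F_argminF hc ha] at this
  linarith

/-- Translating `K` by `(η, 0, η)` keeps the maximiser of `G` off the faces `μ⁻ = 0`, `μ⁺ = 0`,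
where `G` is not differentiable. -/
lemma exists_forall_F_le {K : Set (ℝ × ℝ × ℝ)} (hne : K.Nonempty) (hK : IsCompact K)
    (hconv : Convex ℝ K) (hpos : ∀ μ ∈ K, 0 ≤ μ.1 ∧ 0 ≤ μ.2.2) {M η : ℝ}
    (hM : ∀ μ ∈ K, μ.1 + μ.2.2 ≤ M) (hη : 0 < η) :
    ∃ l, 0 < l ∧ ∀ ν ∈ K, F l ν ≤ sSup (G '' K) + 2 * √(η * (M + η)) := by
  obtain ⟨_, ⟨μ, hμ, rfl⟩, hmax⟩ :=
    (hK.image (continuous_const_add ((η, 0, η) : ℝ × ℝ × ℝ))).exists_isMaxOn (hne.image _)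
      continuous_G.continuousOn
  obtain ⟨hc, ha⟩ := hpos μ hμ
  have hc' : 0 < ((η, 0, η) + μ).1 := by simp only [Prod.fst_add]; linarith
  have ha' : 0 < ((η, 0, η) + μ).2.2 := by simp only [Prod.snd_add]; linarith
  refine ⟨_, argminF_pos hc' ha', fun ν hν => ?_⟩
  calc _ ≤ F _ ((η, 0, η) + ν) := F_le_F_add (argminF_pos hc' ha') hη.le ν
    _ ≤ G ((η, 0, η) + μ) :=
      F_le_G_of_isMaxOn (hconv.translate _) ⟨μ, hμ, rfl⟩ ⟨ν, hν, rfl⟩ hmax hc' ha'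
    _ ≤ G μ + 2 * √(η * (μ.1 + μ.2.2 + η)) := G_add_le hη.le hc ha
    _ ≤ sSup (G '' K) + 2 * √(η * (M + η)) := by
      gcongr
      · exact le_csSup (hK.image continuous_G).bddAbove ⟨μ, hμ, rfl⟩
      · exact hM μ hμ

lemma sSup_G_le_sSup_F {K : Set (ℝ × ℝ × ℝ)} (hne : K.Nonempty) (hK : IsCompact K)
    (hpos : ∀ μ ∈ K, 0 ≤ μ.1 ∧ 0 ≤ μ.2.2) {l : ℝ} (hl : 0 < l) :
    sSup (G '' K) ≤ sSup (F l '' K) :=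
  csSup_le (hne.image G) <| forall_mem_image.2 fun μ hμ =>
    le_csSup_of_le (hK.image (continuous_F l)).bddAbove ⟨μ, hμ, rfl⟩
      (G_le_F hl (hpos μ hμ).1 (hpos μ hμ).2)

theorem minimaxValue_eq {K : Set (ℝ × ℝ × ℝ)} (hne : K.Nonempty) (hK : IsCompact K)
    (hconv : Convex ℝ K) (hpos : ∀ μ ∈ K, 0 ≤ μ.1 ∧ 0 ≤ μ.2.2) :
    minimaxValue K = sSup (G '' K) := by
  set S := sSup (G '' K)
  have hlower : ∀ y ∈ {y : ℝ | ∃ l : ℝ, 0 < l ∧ y = sSup (F l '' K)}, S ≤ y := by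
    rintro _ ⟨l, hl, rfl⟩
    exact sSup_G_le_sSup_F hne hK hpos hl
  refine le_antisymm ?_ (le_csInf ⟨_, 1, one_pos, rfl⟩ hlower)
  obtain ⟨M, hM⟩ := (hK.image (f := fun μ : ℝ × ℝ × ℝ => μ.1 + μ.2.2) (by fun_prop)).bddAbove
  have hlim : Tendsto (fun η => S + 2 * √(η * (M + η))) (𝓝[>] 0) (𝓝 S) := by
    have hcont : Continuous (fun η => S + 2 * √(η * (M + η))) := by fun_prop
    simpa using (hcont.tendsto 0).mono_left nhdsWithin_le_nhds
  refine ge_of_tendsto hlim (eventually_nhdsWithin_of_forall fun η hη => ?_)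
  obtain ⟨l, hl, hF⟩ := exists_forall_F_le hne hK hconv hpos (fun μ hμ => hM ⟨μ, hμ, rfl⟩) hη
  exact (csInf_le ⟨S, hlower⟩ ⟨l, hl, rfl⟩).trans
    (csSup_le (hne.image _) (forall_mem_image.2 hF))

lemma minimaxValue_singleton (μ : ℝ × ℝ × ℝ) :
    minimaxValue {μ} = sInf {z : ℝ | ∃ l : ℝ, 0 < l ∧ z = F l μ} := by
  simp [minimaxValue]

lemma sInf_F_eq_G {μ : ℝ × ℝ × ℝ} (hc : 0 ≤ μ.1) (ha : 0 ≤ μ.2.2) :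
    sInf {z : ℝ | ∃ l : ℝ, 0 < l ∧ z = F l μ} = G μ := by
  rw [← minimaxValue_singleton, minimaxValue_eq (singleton_nonempty μ) isCompact_singleton
    (convex_singleton μ) (by simpa using ⟨hc, ha⟩), image_singleton, csSup_singleton]

end ExtinctionMinimax

open ExtinctionMinimax in
/-- For a nonempty compact convex `K ⊆ [0,∞)³` (points written
`μ = (μ⁻, μ⁰, μ⁺)`),
`inf_{λ>0} sup_{μ∈K} (λμ⁺ + μ⁰ + λ⁻¹μ⁻) = sup_{μ∈K} inf_{λ>0} (λμ⁺ + μ⁰ + λ⁻¹μ⁻)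
 = sup_{μ∈K} (μ⁰ + 2√(μ⁺μ⁻))`. -/
theorem stmt1 (K : Set (ℝ × ℝ × ℝ)) (hne : K.Nonempty) (hK : IsCompact K)
    (hconv : Convex ℝ K)
    (hpos : ∀ μ ∈ K, 0 ≤ μ.1 ∧ 0 ≤ μ.2.1 ∧ 0 ≤ μ.2.2) :
    sInf {y : ℝ | ∃ l : ℝ, 0 < l ∧
        y = sSup ((fun μ : ℝ × ℝ × ℝ => l * μ.2.2 + μ.2.1 + l⁻¹ * μ.1) '' K)}
      = sSup ((fun μ : ℝ × ℝ × ℝ =>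
          sInf {z : ℝ | ∃ l : ℝ, 0 < l ∧ z = l * μ.2.2 + μ.2.1 + l⁻¹ * μ.1}) '' K) ∧
    sInf {y : ℝ | ∃ l : ℝ, 0 < l ∧
        y = sSup ((fun μ : ℝ × ℝ × ℝ => l * μ.2.2 + μ.2.1 + l⁻¹ * μ.1) '' K)}
      = sSup ((fun μ : ℝ × ℝ × ℝ => μ.2.1 + 2 * Real.sqrt (μ.2.2 * μ.1)) '' K) := by
  have hpos' : ∀ μ ∈ K, 0 ≤ μ.1 ∧ 0 ≤ μ.2.2 := fun μ hμ => ⟨(hpos μ hμ).1, (hpos μ hμ).2.2⟩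
  have hvalue : minimaxValue K = sSup (G '' K) := minimaxValue_eq hne hK hconv hpos'
  have hinner : (fun μ => sInf {z : ℝ | ∃ l : ℝ, 0 < l ∧ z = F l μ}) '' K = G '' K :=
    image_congr fun μ hμ => sInf_F_eq_G (hpos' μ hμ).1 (hpos' μ hμ).2
  exact ⟨hvalue.trans (congrArg sSup hinner.symm), hvalue⟩
end

section
/- Let K be a nonempty compact convex subset of ℝ³ whose points μ = (μ⁻, μ⁰, μ⁺) satisfy μ⁻ > 0, μ⁰ ≥ 0, μ⁺ > 0. Then the following are equivalent: (i) there exists λ > 0 such that λ⁻¹·μ⁻ + μ⁰ + λ·μ⁺ ≤ 1 for every μ ∈ K; (ii) μ⁰ + 2·√(μ⁺·μ⁻) ≤ 1 for every μ ∈ K. -/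
/-!
(i) ⇒ (ii) is AM–GM: `λ⁻¹μ⁻ + λμ⁺ ≥ 2√(μ⁺μ⁻)`, with equality at `λ = √(μ⁻/μ⁺)`.

For (ii) ⇒ (i), the admissible `λ` for a single `μ` form a compact interval (a sublevel set of
a convex function of `λ`), so by Helly's theorem on the line it suffices that any two of these
intervals meet. Write `g(λ, μ) = λ⁻¹μ⁻ + μ⁰ + λμ⁺` (`tiltedMean`). For `μ, ν ∈ K`, follow the
minimiser `λ(t)` of `g(·, σ t)` along the segment `σ t = (1 - t) μ + t ν ⊆ K`. Since `g(λ, μ)`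
is affine in `μ`, `(1 - t) g(λ(t), μ) + t g(λ(t), ν) = g(λ(t), σ t) ≤ 1`, and the intermediate
value theorem yields a `t` at which `λ(t)` is admissible for both `μ` and `ν`.
-/

open Set

theorem Convex.helly_theorem_compact_real {ι : Type*} {F : ι → Set ℝ}
    (h_convex : ∀ i, Convex ℝ (F i)) (h_compact : ∀ i, IsCompact (F i))
    (h_inter : ∀ i j, (F i ∩ F j).Nonempty) : (⋂ i, F i).Nonempty := by
  classical
  refine Convex.helly_theorem_compact' h_convex h_compact fun I hI => ?_
  rw [Module.finrank_self] at hI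
  obtain rfl | ⟨i, hi⟩ := I.eq_empty_or_nonempty
  · simp
  have : Nonempty ι := ⟨i⟩
  obtain ⟨j, hj⟩ := Finset.card_le_one_iff_subset_singleton.1
    (by rw [Finset.card_erase_of_mem hi]; omega : (I.erase i).card ≤ 1)
  have hIij : I ⊆ {i, j} := fun k hk => by
    by_cases hki : k = i
    · simp [hki]
    · simpa [hki] using hj (Finset.mem_erase.2 ⟨hki, hk⟩)
  refine (h_inter i j).mono fun x hx => mem_iInter₂.2 fun k hk => ?_
  rcases Finset.mem_insert.1 (hIij hk) with rfl | hk
  · exact hx.1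
  · rw [Finset.mem_singleton.1 hk]; exact hx.2

theorem exists_mem_Icc_le_and_le_of_convexCombination_le {a b : ℝ → ℝ} {c : ℝ}
    (ha : ContinuousOn a (Icc 0 1)) (hb : ContinuousOn b (Icc 0 1))
    (hab : ∀ t ∈ Icc (0 : ℝ) 1, (1 - t) * a t + t * b t ≤ c) :
    ∃ t ∈ Icc (0 : ℝ) 1, a t ≤ c ∧ b t ≤ c := by
  have ha0 : a 0 ≤ c := by simpa using hab 0 (left_mem_Icc.2 zero_le_one)
  have hb1 : b 1 ≤ c := by simpa using hab 1 (right_mem_Icc.2 zero_le_one)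
  by_cases hb0 : b 0 ≤ c
  · exact ⟨0, left_mem_Icc.2 zero_le_one, ha0, hb0⟩
  by_cases ha1 : a 1 ≤ c
  · exact ⟨1, right_mem_Icc.2 zero_le_one, ha1, hb1⟩
  obtain ⟨t, ht, hbt⟩ : ∃ t ∈ Icc (0 : ℝ) 1, a t - b t = 0 :=
    intermediate_value_Icc zero_le_one (ha.sub hb)
      ⟨by rw [Pi.sub_apply]; linarith, by rw [Pi.sub_apply]; linarith⟩
  have hcomb : (1 - t) * a t + t * b t = a t := by rw [sub_eq_zero.1 hbt]; ring
  have hat := hcomb ▸ hab t ht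
  exact ⟨t, ht, hat, sub_eq_zero.1 hbt ▸ hat⟩

noncomputable def tiltedMean (l : ℝ) (μ : ℝ × ℝ × ℝ) : ℝ := l⁻¹ * μ.1 + μ.2.1 + l * μ.2.2

def admissibleTilts (μ : ℝ × ℝ × ℝ) : Set ℝ := {l ∈ Ioi 0 | tiltedMean l μ ≤ 1}

theorem tiltedMean_smul_add_smul (l a b : ℝ) (μ ν : ℝ × ℝ × ℝ) :
    tiltedMean l (a • μ + b • ν) = a * tiltedMean l μ + b * tiltedMean l ν := by
  simp only [tiltedMean, Prod.fst_add, Prod.snd_add, Prod.smul_fst, Prod.smul_snd, smul_eq_mul]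
  ring

theorem continuousOn_tiltedMean (μ : ℝ × ℝ × ℝ) : ContinuousOn (tiltedMean · μ) (Ioi 0) :=
  ((continuousOn_inv₀.mono fun _ hl => ne_of_gt hl).mul continuousOn_const |>.add
    continuousOn_const).add (continuousOn_id.mul continuousOn_const)

theorem convexOn_tiltedMean {μ : ℝ × ℝ × ℝ} (hm : 0 ≤ μ.1) (hp : 0 ≤ μ.2.2) :
    ConvexOn ℝ (Ioi 0) (tiltedMean · μ) := by
  refine ((((convexOn_zpow (-1)).smul hm).add (convexOn_const μ.2.1 (convex_Ioi 0))).add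
    ((convexOn_id (convex_Ioi 0)).smul hp)).congr fun l _ => ?_
  simp only [tiltedMean, Pi.add_apply, smul_eq_mul, zpow_neg_one, id]
  ring

theorem add_two_mul_sqrt_le_tiltedMean {l : ℝ} {μ : ℝ × ℝ × ℝ} (hl : 0 < l) (hm : 0 ≤ μ.1)
    (hp : 0 ≤ μ.2.2) : μ.2.1 + 2 * √(μ.2.2 * μ.1) ≤ tiltedMean l μ := by
  have hprod : μ.2.2 * μ.1 = (l⁻¹ * μ.1) * (l * μ.2.2) := by field_simp
  have amgm : √(μ.2.2 * μ.1) ≤ (l⁻¹ * μ.1 + l * μ.2.2) / 2 :=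
    Real.sqrt_le_iff.2
      ⟨by positivity, by rw [hprod]; nlinarith [sq_nonneg (l⁻¹ * μ.1 - l * μ.2.2)]⟩
  unfold tiltedMean
  linarith

theorem tiltedMean_sqrt_div {μ : ℝ × ℝ × ℝ} (hm : 0 < μ.1) (hp : 0 < μ.2.2) :
    tiltedMean √(μ.1 / μ.2.2) μ = μ.2.1 + 2 * √(μ.2.2 * μ.1) := by
  have hsm := Real.sqrt_pos.2 hm
  have hsp := Real.sqrt_pos.2 hp
  rw [tiltedMean, Real.sqrt_div hm.le, Real.sqrt_mul hp.le]
  field_simp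
  nlinarith [Real.mul_self_sqrt hm.le, Real.mul_self_sqrt hp.le]

theorem convex_admissibleTilts {μ : ℝ × ℝ × ℝ} (hm : 0 ≤ μ.1) (hp : 0 ≤ μ.2.2) :
    Convex ℝ (admissibleTilts μ) :=
  (convexOn_tiltedMean hm hp).convex_le 1

theorem admissibleTilts_subset_Icc {μ : ℝ × ℝ × ℝ} (hm : 0 ≤ μ.1) (hz : 0 ≤ μ.2.1)
    (hp : 0 < μ.2.2) : admissibleTilts μ ⊆ Icc μ.1 μ.2.2⁻¹ := by
  rintro l ⟨hl : 0 < l, hle⟩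
  unfold tiltedMean at hle
  have h1 : l⁻¹ * μ.1 ≤ 1 := by nlinarith
  have h2 : l * μ.2.2 ≤ 1 := by nlinarith [mul_nonneg (inv_nonneg.2 hl.le) hm]
  exact ⟨by rwa [inv_mul_le_iff₀ hl, mul_one] at h1, by rwa [← one_div, le_div_iff₀ hp]⟩

theorem isCompact_admissibleTilts {μ : ℝ × ℝ × ℝ} (hm : 0 < μ.1) (hz : 0 ≤ μ.2.1)
    (hp : 0 < μ.2.2) : IsCompact (admissibleTilts μ) := by
  have hIcc : Icc μ.1 μ.2.2⁻¹ ⊆ Ioi 0 := fun l hl => hm.trans_le hl.1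
  have heq : admissibleTilts μ = Icc μ.1 μ.2.2⁻¹ ∩ (tiltedMean · μ) ⁻¹' Iic 1 :=
    Subset.antisymm (fun l hl => ⟨admissibleTilts_subset_Icc hm.le hz hp hl, hl.2⟩)
      fun l hl => ⟨hIcc hl.1, hl.2⟩
  rw [heq]
  exact isCompact_Icc.of_isClosed_subset (((continuousOn_tiltedMean μ).mono hIcc)
    |>.preimage_isClosed_of_isClosed isClosed_Icc isClosed_Iic) inter_subset_left

theorem admissibleTilts_inter_nonempty {K : Set (ℝ × ℝ × ℝ)} (hconv : Convex ℝ K)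
    (hpos : ∀ μ ∈ K, 0 < μ.1 ∧ 0 < μ.2.2)
    (hK : ∀ μ ∈ K, μ.2.1 + 2 * √(μ.2.2 * μ.1) ≤ 1) {μ ν : ℝ × ℝ × ℝ} (hμ : μ ∈ K)
    (hν : ν ∈ K) : (admissibleTilts μ ∩ admissibleTilts ν).Nonempty := by
  set σ : ℝ → ℝ × ℝ × ℝ := fun t => (1 - t) • μ + t • ν
  have hσK : ∀ t ∈ Icc (0 : ℝ) 1, σ t ∈ K := fun t ht =>
    hconv hμ hν (sub_nonneg.2 ht.2) ht.1 (sub_add_cancel 1 t)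
  set h : ℝ → ℝ := fun t => √((σ t).1 / (σ t).2.2)
  have hh_pos : MapsTo h (Icc 0 1) (Ioi 0) := fun t ht =>
    Real.sqrt_pos.2 (div_pos (hpos _ (hσK t ht)).1 (hpos _ (hσK t ht)).2)
  have hh_cont : ContinuousOn h (Icc 0 1) :=
    Real.continuous_sqrt.comp_continuousOn <| ContinuousOn.div (by fun_prop) (by fun_prop)
      fun t ht => (hpos _ (hσK t ht)).2.ne'
  obtain ⟨t, ht, hμt, hνt⟩ := exists_mem_Icc_le_and_le_of_convexCombination_le
    ((continuousOn_tiltedMean μ).comp hh_cont hh_pos)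
    ((continuousOn_tiltedMean ν).comp hh_cont hh_pos) fun t ht => by
      obtain ⟨hm, hp⟩ := hpos _ (hσK t ht)
      calc (1 - t) * tiltedMean (h t) μ + t * tiltedMean (h t) ν = tiltedMean (h t) (σ t) :=
            (tiltedMean_smul_add_smul _ _ _ _ _).symm
        _ = (σ t).2.1 + 2 * √((σ t).2.2 * (σ t).1) := tiltedMean_sqrt_div hm hp
        _ ≤ 1 := hK _ (hσK t ht)
  exact ⟨h t, ⟨hh_pos ht, hμt⟩, hh_pos ht, hνt⟩

theorem stmt2_general (K : Set (ℝ × ℝ × ℝ)) (hne : K.Nonempty)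
    (hconv : Convex ℝ K)
    (hpos : ∀ μ ∈ K, 0 < μ.1 ∧ 0 ≤ μ.2.1 ∧ 0 < μ.2.2) :
    (∃ l : ℝ, 0 < l ∧ ∀ μ ∈ K, l⁻¹ * μ.1 + μ.2.1 + l * μ.2.2 ≤ 1) ↔
    (∀ μ ∈ K, μ.2.1 + 2 * Real.sqrt (μ.2.2 * μ.1) ≤ 1) := by
  constructor
  · rintro ⟨l, hl, hle⟩ μ hμ
    exact (add_two_mul_sqrt_le_tiltedMean hl (hpos μ hμ).1.le (hpos μ hμ).2.2.le).trans
      (hle μ hμ)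
  · intro hK
    obtain ⟨l, hl⟩ := Convex.helly_theorem_compact_real
      (F := fun μ : K => admissibleTilts μ)
      (fun μ => convex_admissibleTilts (hpos μ μ.2).1.le (hpos μ μ.2).2.2.le)
      (fun μ => isCompact_admissibleTilts (hpos μ μ.2).1 (hpos μ μ.2).2.1 (hpos μ μ.2).2.2)
      fun μ ν => admissibleTilts_inter_nonempty hconv
        (fun μ hμ => ⟨(hpos μ hμ).1, (hpos μ hμ).2.2⟩) hK μ.2 ν.2
    have hl : ∀ μ ∈ K, l ∈ admissibleTilts μ := fun μ hμ => mem_iInter.1 hl ⟨μ, hμ⟩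
    obtain ⟨μ₀, hμ₀⟩ := hne
    exact ⟨l, (hl μ₀ hμ₀).1, fun μ hμ => (hl μ hμ).2⟩

/-- For a nonempty compact convex `K ⊆ ℝ³` whose points
`μ = (μ⁻, μ⁰, μ⁺)` satisfy `μ⁻ > 0`, `μ⁰ ≥ 0`, `μ⁺ > 0`, the following are equivalent:
(i) there exists `λ > 0` with `λ⁻¹μ⁻ + μ⁰ + λμ⁺ ≤ 1` for all `μ ∈ K`;
(ii) `μ⁰ + 2√(μ⁺μ⁻) ≤ 1` for all `μ ∈ K`. -/
theorem stmt2 (K : Set (ℝ × ℝ × ℝ)) (hne : K.Nonempty) (hK : IsCompact K)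
    (hconv : Convex ℝ K)
    (hpos : ∀ μ ∈ K, 0 < μ.1 ∧ 0 ≤ μ.2.1 ∧ 0 < μ.2.2) :
    (∃ l : ℝ, 0 < l ∧ ∀ μ ∈ K, l⁻¹ * μ.1 + μ.2.1 + l * μ.2.2 ≤ 1) ↔
    (∀ μ ∈ K, μ.2.1 + 2 * Real.sqrt (μ.2.2 * μ.1) ≤ 1) :=
  stmt2_general K hne hconv hpos
end

section
/- Let μ⁻, μ⁰, μ⁺, λ be real numbers with μ⁺ ≠ 0 and λ ≠ 0, and let B(λ) be the 2×2 matrix with rows (1, −λ) and (1, 0). Then B(λ) is invertible (its determinant equals λ), and A(μ⁻,μ⁰,μ⁺) = λ · B(λ)⁻¹ · A^{(λ)}(μ⁻,μ⁰,μ⁺) · B(λ). -/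
/-- The matrix `A(μ⁻,μ⁰,μ⁺)` from the paper: first row `((1−μ⁰)/μ⁺, −μ⁻/μ⁺)`,
second row `(1, 0)`. -/
noncomputable def Amat (μm μ0 μp : ℝ) : Matrix (Fin 2) (Fin 2) ℝ :=
  !![(1 - μ0) / μp, -μm / μp; 1, 0]

/-- The matrix `A^{(λ)}(μ⁻,μ⁰,μ⁺)` from the paper: first row
`(μ⁻/(λ²μ⁺), (1−μ⁰−λ⁻¹μ⁻−λμ⁺)/(λμ⁺))`, second row
`(μ⁻/(λ²μ⁺), 1+(1−μ⁰−λ⁻¹μ⁻−λμ⁺)/(λμ⁺))`. -/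
noncomputable def Alam (μm μ0 μp l : ℝ) : Matrix (Fin 2) (Fin 2) ℝ :=
  !![μm / (l ^ 2 * μp), (1 - μ0 - l⁻¹ * μm - l * μp) / (l * μp);
     μm / (l ^ 2 * μp), 1 + (1 - μ0 - l⁻¹ * μm - l * μp) / (l * μp)]

/-- The change-of-basis matrix `B(λ)` with rows `(1, −λ)` and `(1, 0)`. -/
noncomputable def Bmat (l : ℝ) : Matrix (Fin 2) (Fin 2) ℝ :=
  !![1, -l; 1, 0]

theorem Matrix.eq_smul_inv_mul_mul_of_mul_eq {n R : Type*} [Fintype n] [DecidableEq n]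
    [CommRing R] {P A A' : Matrix n n R} {c : R} (hP : IsUnit P.det)
    (h : P * A = c • (A' * P)) : A = c • (P⁻¹ * A' * P) := by
  rw [← Matrix.nonsing_inv_mul_cancel_left P A hP, h, Matrix.mul_smul, Matrix.mul_assoc]

theorem det_Bmat (l : ℝ) : (Bmat l).det = l := by
  simp [Bmat, Matrix.det_fin_two_of]

theorem Bmat_mul_Amat {μm μ0 μp l : ℝ} (hp : μp ≠ 0) (hl : l ≠ 0) :
    Bmat l * Amat μm μ0 μp = l • (Alam μm μ0 μp l * Bmat l) := by
  rw [Bmat, Amat, Alam, Matrix.mul_fin_two, Matrix.mul_fin_two, Matrix.smul_of]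
  ext i j
  fin_cases i <;> fin_cases j <;>
    simp only [Fin.zero_eta, Fin.mk_one, Matrix.of_apply, Matrix.cons_val', Matrix.cons_val_zero,
      Matrix.cons_val_one, Matrix.cons_val_fin_one, Matrix.smul_cons, smul_eq_mul,
      Matrix.smul_empty] <;>
    field_simp <;> ring

/-- For `μ⁺ ≠ 0` and `λ ≠ 0`, the matrix `B(λ)` is invertible with
determinant `λ`, and `A(μ⁻,μ⁰,μ⁺) = λ · B(λ)⁻¹ · A^{(λ)}(μ⁻,μ⁰,μ⁺) · B(λ)`. -/
theorem stmt6 (μm μ0 μp l : ℝ) (hp : μp ≠ 0) (hl : l ≠ 0) :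
    (Bmat l).det = l ∧ IsUnit (Bmat l) ∧
    Amat μm μ0 μp = l • ((Bmat l)⁻¹ * Alam μm μ0 μp l * Bmat l) := by
  have hdet : IsUnit (Bmat l).det := by rw [det_Bmat]; exact hl.isUnit
  exact ⟨det_Bmat l, (Matrix.isUnit_iff_isUnit_det _).2 hdet,
    Matrix.eq_smul_inv_mul_mul_of_mul_eq hdet (Bmat_mul_Amat hp hl)⟩
end

section
/- Let (c_k)_{k≥1} be an i.i.d. sequence of strictly positive random variables with E[|ln c₁|] < ∞, and for each k let A_k be the 2×2 matrix with rows (c_k, 0) and (c_k, 1). Then almost surely (1/n)·ln‖A_n·A_{n−1}⋯A_1‖ → max(0, E[ln c₁]) as n → ∞, where ‖·‖ is the operator norm. -/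
open MeasureTheory ProbabilityTheory Filter
open scoped Matrix.Norms.L2Operator

/-- Ordered product `A_n ⋯ A_1` of a sequence of matrices (empty product is `1`). -/
noncomputable def prodDesc (M : ℕ → Matrix (Fin 2) (Fin 2) ℝ) :
    ℕ → Matrix (Fin 2) (Fin 2) ℝ
  | 0 => 1
  | n + 1 => M (n + 1) * prodDesc M n

open Finset Real Topology

/-! The product `A_n ⋯ A_1` is lower triangular with diagonal `(π_n, 1)`, where
`π_n = c_1 ⋯ c_n`, and lower-left entry `π_1 + ⋯ + π_n`. Comparing the operator norm with the
entries shows that it is within a factor `2` of `T_n = π_0 + ⋯ + π_n`. By the strong law of large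
numbers `(1/n) ln π_n → E ln c₁`, and `max_{k ≤ n} π_k ≤ T_n ≤ (n + 1) max_{k ≤ n} π_k`, so
`T_n` grows at the rate of the running maximum of `π_k`, which is `max(0, E ln c₁)` because
`π_0 = 1`. -/

namespace EuclideanSpace
variable {𝕜 ι : Type*} [RCLike 𝕜] [Fintype ι]

lemma norm_le_sum_norm (x : EuclideanSpace 𝕜 ι) : ‖x‖ ≤ ∑ i, ‖x i‖ := by
  refine abs_le_of_sq_le_sq' ?_ (by positivity) |>.2
  rw [EuclideanSpace.norm_sq_eq]
  exact sum_sq_le_sq_sum_of_nonneg fun _ _ ↦ norm_nonneg _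

end EuclideanSpace

namespace Matrix
variable {𝕜 m n : Type*} [RCLike 𝕜] [Fintype m] [Fintype n] [DecidableEq n]

lemma norm_entry_le_l2_opNorm (A : Matrix m n 𝕜) (i : m) (j : n) : ‖A i j‖ ≤ ‖A‖ :=
  calc ‖A i j‖ = ‖(EuclideanSpace.equiv m 𝕜).symm (A *ᵥ EuclideanSpace.single j 1) i‖ := by
        simp [mulVec_single]
    _ ≤ ‖(EuclideanSpace.equiv m 𝕜).symm (A *ᵥ EuclideanSpace.single j 1)‖ :=
        PiLp.norm_apply_le _ i
    _ ≤ ‖A‖ * ‖EuclideanSpace.single j (1 : 𝕜)‖ := A.l2_opNorm_mulVec _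
    _ = ‖A‖ := by simp

lemma l2_opNorm_le_sum_norm_entry (A : Matrix m n 𝕜) : ‖A‖ ≤ ∑ i, ∑ j, ‖A i j‖ := by
  rw [l2_opNorm_def]
  refine ContinuousLinearMap.opNorm_le_bound _ (by positivity) fun x ↦ ?_
  calc _ ≤ ∑ i, ‖(A *ᵥ x) i‖ := EuclideanSpace.norm_le_sum_norm _
    _ ≤ ∑ i, ∑ j, ‖A i j‖ * ‖x‖ := by
        gcongr with i
        refine (norm_sum_le _ _).trans (sum_le_sum fun j _ ↦ ?_)
        rw [norm_mul]
        gcongr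
        exact PiLp.norm_apply_le x j
    _ = (∑ i, ∑ j, ‖A i j‖) * ‖x‖ := by simp only [sum_mul]

end Matrix

lemma abs_log_sub_log_le_log_of_le_mul {x y C : ℝ} (hx : 0 < x) (hy : 0 < y)
    (hxy : x ≤ C * y) (hyx : y ≤ C * x) : |log x - log y| ≤ log C := by
  have hC : 0 < C := pos_of_mul_pos_left (hx.trans_le hxy) hy.le
  rw [abs_sub_le_iff, sub_le_iff_le_add, sub_le_iff_le_add, ← log_mul hC.ne' hy.ne',
    ← log_mul hC.ne' hx.ne']
  exact ⟨log_le_log hx hxy, log_le_log hy hyx⟩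

lemma Filter.Tendsto.div_natCast_of_abs_sub_le {u v : ℕ → ℝ} {l K : ℝ}
    (h : Tendsto (fun n ↦ u n / n) atTop (𝓝 l)) (hK : ∀ n, |v n - u n| ≤ K) :
    Tendsto (fun n ↦ v n / n) atTop (𝓝 l) := by
  have hdiff : Tendsto (fun n : ℕ ↦ (v n - u n) / n) atTop (𝓝 0) := by
    refine squeeze_zero_norm (fun n ↦ ?_) (tendsto_const_div_atTop_nhds_zero_nat K)
    rw [norm_div, Real.norm_eq_abs, Real.norm_natCast]
    exact div_le_div_of_nonneg_right (hK n) n.cast_nonneg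
  simpa [sub_div] using h.add hdiff

lemma tendsto_log_add_one_div_natCast :
    Tendsto (fun n : ℕ ↦ log ((n : ℝ) + 1) / n) atTop (𝓝 0) := by
  have := (tendsto_pow_log_div_mul_add_atTop 1 (-1) 1 one_ne_zero).comp
    (tendsto_atTop_add_const_right _ 1 tendsto_natCast_atTop_atTop)
  refine this.congr fun n ↦ ?_
  simp

lemma tendsto_sup'_range_div {L : ℕ → ℝ} {m : ℝ} (h : Tendsto (fun n ↦ L n / n) atTop (𝓝 m)) :
    Tendsto (fun n ↦ (range (n + 1)).sup' nonempty_range_add_one L / n) atTop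
      (𝓝 (max m 0)) := by
  set M := fun n ↦ (range (n + 1)).sup' nonempty_range_add_one L
  have hlower : Tendsto (fun n : ℕ ↦ max (L n) (L 0) / n) atTop (𝓝 (max m 0)) := by
    simp_rw [← max_div_div_right (Nat.cast_nonneg _)]
    exact h.max (tendsto_const_div_atTop_nhds_zero_nat _)
  refine tendsto_order.2 ⟨fun b hb ↦ ?_, fun b hb ↦ ?_⟩
  · filter_upwards [hlower.eventually (lt_mem_nhds hb)] with n hn
    refine hn.trans_le (div_le_div_of_nonneg_right (max_le ?_ ?_) n.cast_nonneg)
    · exact le_sup' L (self_mem_range_succ n)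
    · exact le_sup' L (mem_range.2 n.succ_pos)
  obtain ⟨b', hb', hb'b⟩ := exists_between hb
  have hb'0 : 0 < b' := (le_max_right m 0).trans_lt hb'
  obtain ⟨N, hN⟩ := eventually_atTop.1 (h.eventually (gt_mem_nhds ((le_max_left m 0).trans_lt hb')))
  have hbound : ∀ n, M n ≤ max (M N) (b' * n) := by
    intro n
    refine sup'_le _ _ fun k hk ↦ ?_
    rcases le_or_gt k N with hkN | hkN
    · exact (le_sup' L (mem_range_succ_iff.2 hkN)).trans (le_max_left _ _)
    · have hk0 : (0 : ℝ) < k := by exact_mod_cast N.zero_le.trans_lt hkN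
      have hkn : (k : ℝ) ≤ n := by exact_mod_cast mem_range_succ_iff.1 hk
      calc L k ≤ b' * k := ((div_lt_iff₀ hk0).1 (hN k hkN.le)).le
        _ ≤ b' * n := by gcongr
        _ ≤ _ := le_max_right _ _
  have hupper : Tendsto (fun n : ℕ ↦ max (M N) (b' * n) / n) atTop (𝓝 (max 0 b')) := by
    refine ((tendsto_const_div_atTop_nhds_zero_nat (M N)).max tendsto_const_nhds).congr' ?_
    filter_upwards [eventually_gt_atTop 0] with n hn
    rw [← max_div_div_right n.cast_nonneg, mul_div_cancel_right₀ _ (by positivity)]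
  filter_upwards [hupper.eventually (gt_mem_nhds ((max_eq_right hb'0.le).trans_lt hb'b))]
    with n hn
  exact (div_le_div_of_nonneg_right (hbound n) n.cast_nonneg).trans_lt hn

lemma tendsto_log_sum_range_div {x : ℕ → ℝ} (hx : ∀ n, 0 < x n) {m : ℝ}
    (h : Tendsto (fun n ↦ log (x n) / n) atTop (𝓝 m)) :
    Tendsto (fun n ↦ log (∑ k ∈ range (n + 1), x k) / n) atTop (𝓝 (max m 0)) := by
  set M := fun n ↦ (range (n + 1)).sup' nonempty_range_add_one (fun k ↦ log (x k))
  have hsum_pos : ∀ n, 0 < ∑ k ∈ range (n + 1), x k := fun n ↦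
    sum_pos (fun k _ ↦ hx k) nonempty_range_add_one
  have hlower : ∀ n, M n ≤ log (∑ k ∈ range (n + 1), x k) := fun n ↦
    sup'_le _ _ fun k hk ↦ log_le_log (hx k) (single_le_sum (fun j _ ↦ (hx j).le) hk)
  have hupper : ∀ n, log (∑ k ∈ range (n + 1), x k) ≤ log ((n : ℝ) + 1) + M n := by
    intro n
    have hle : ∑ k ∈ range (n + 1), x k ≤ ((n : ℝ) + 1) * exp (M n) := by
      calc ∑ k ∈ range (n + 1), x k ≤ #(range (n + 1)) • exp (M n) :=
            sum_le_card_nsmul _ _ _ fun k hk ↦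
              (exp_log (hx k)).symm.trans_le (exp_le_exp.2 (le_sup' (fun k ↦ log (x k)) hk))
        _ = ((n : ℝ) + 1) * exp (M n) := by simp
    calc log (∑ k ∈ range (n + 1), x k) ≤ log (((n : ℝ) + 1) * exp (M n)) :=
          log_le_log (hsum_pos n) hle
      _ = log ((n : ℝ) + 1) + M n := by rw [log_mul (by positivity) (exp_ne_zero _), log_exp]
  have hM := tendsto_sup'_range_div h
  refine tendsto_of_tendsto_of_tendsto_of_le_of_le hM
    (by simpa using tendsto_log_add_one_div_natCast.add hM) (fun n ↦ ?_) (fun n ↦ ?_)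
  · exact div_le_div_of_nonneg_right (hlower n) n.cast_nonneg
  · simpa only [add_div] using div_le_div_of_nonneg_right (hupper n) n.cast_nonneg

lemma prodDesc_eq (a : ℕ → ℝ) (n : ℕ) :
    prodDesc (fun k ↦ !![a k, 0; a k, 1]) n =
      !![∏ i ∈ range n, a (i + 1), 0;
        ∑ k ∈ range (n + 1), ∏ i ∈ range k, a (i + 1) - 1, 1] := by
  induction n with
  | zero => simp [prodDesc, Matrix.one_fin_two]
  | succ n ih =>
    rw [prodDesc, ih, Matrix.mul_fin_two, sum_range_succ _ (n + 1), prod_range_succ]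
    ext i j
    fin_cases i <;> fin_cases j <;> simp <;> ring

lemma abs_log_norm_prodDesc_sub_le {a : ℕ → ℝ} (ha : ∀ k, 0 ≤ a k) (n : ℕ) :
    |log ‖prodDesc (fun k ↦ !![a k, 0; a k, 1]) n‖ -
      log (∑ k ∈ range (n + 1), ∏ i ∈ range k, a (i + 1))| ≤ log 2 := by
  set p := fun k ↦ ∏ i ∈ range k, a (i + 1)
  set T := ∑ k ∈ range (n + 1), p k
  have hp : ∀ k, 0 ≤ p k := fun k ↦ prod_nonneg fun i _ ↦ ha (i + 1)
  have hpT : p n ≤ T := single_le_sum (fun k _ ↦ hp k) (self_mem_range_succ n)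
  have hT : 1 ≤ T := by
    simpa [p] using single_le_sum (fun k _ ↦ hp k) (mem_range.2 n.succ_pos)
  rw [prodDesc_eq]
  set A : Matrix (Fin 2) (Fin 2) ℝ := !![p n, 0; T - 1, 1]
  have hlower : T ≤ 2 * ‖A‖ := by
    have h10 := A.norm_entry_le_l2_opNorm 1 0
    have h11 := A.norm_entry_le_l2_opNorm 1 1
    simp only [A, Matrix.of_apply, Matrix.cons_val', Matrix.cons_val_zero, Matrix.cons_val_one,
      Matrix.empty_val', Matrix.cons_val_fin_one, Real.norm_eq_abs, abs_one] at h10 h11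
    rw [abs_of_nonneg (by linarith)] at h10
    linarith
  have hupper : ‖A‖ ≤ 2 * T := by
    have := A.l2_opNorm_le_sum_norm_entry
    simp only [A, Fin.sum_univ_two, Matrix.of_apply, Matrix.cons_val', Matrix.cons_val_zero,
      Matrix.cons_val_one, Matrix.empty_val', Matrix.cons_val_fin_one, Real.norm_eq_abs,
      abs_zero, abs_one, abs_of_nonneg (hp n), abs_of_nonneg (sub_nonneg.2 hT)] at this
    linarith
  exact abs_log_sub_log_le_log_of_le_mul (by linarith) (by linarith) hupper hlower

lemma ae_tendsto_sum_comp_div {Ω E : Type*} [MeasurableSpace Ω] [MeasurableSpace E]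
    {P : Measure Ω} {c : ℕ → Ω → E} (hmeas : ∀ k, Measurable (c k)) (hindep : iIndepFun c P)
    (hident : ∀ k, 1 ≤ k → Measure.map (c k) P = Measure.map (c 1) P)
    {f : E → ℝ} (hf : Measurable f) (hint : Integrable (fun ω ↦ f (c 1 ω)) P) :
    ∀ᵐ ω ∂P, Tendsto (fun n : ℕ ↦ (∑ i ∈ range n, f (c (i + 1) ω)) / n) atTop
      (𝓝 (∫ ω, f (c 1 ω) ∂P)) :=
  strong_law_ae_real (fun i ω ↦ f (c (i + 1) ω)) hint
    (fun i j hij ↦ (hindep.indepFun (by omega : i + 1 ≠ j + 1)).comp hf hf)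
    (fun i ↦ (IdentDistrib.mk (hmeas _).aemeasurable (hmeas 1).aemeasurable
      (hident _ (by omega))).comp hf)

theorem stmt9_general {Ω : Type*} [MeasurableSpace Ω] (P : Measure Ω)
    (c : ℕ → Ω → ℝ)
    (hmeas : ∀ k, Measurable (c k))
    (hpos : ∀ k, ∀ᵐ ω ∂P, 0 < c k ω)
    (hindep : iIndepFun c P)
    (hident : ∀ k, 1 ≤ k → Measure.map (c k) P = Measure.map (c 1) P)
    (hint : Integrable (fun ω => |Real.log (c 1 ω)|) P) :
    ∀ᵐ ω ∂P,
      Tendsto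
        (fun n : ℕ =>
          (n : ℝ)⁻¹ * Real.log ‖prodDesc (fun k => !![c k ω, 0; c k ω, 1]) n‖)
        atTop (nhds (max 0 (∫ ω, Real.log (c 1 ω) ∂P))) := by
  have hlog_int : Integrable (fun ω ↦ log (c 1 ω)) P :=
    (integrable_norm_iff (measurable_log.comp (hmeas 1)).aestronglyMeasurable).1 hint
  filter_upwards [ae_tendsto_sum_comp_div hmeas hindep hident measurable_log hlog_int,
    ae_all_iff.2 hpos] with ω hslln hc
  have hprod_pos : ∀ n, 0 < ∏ i ∈ range n, c (i + 1) ω := fun n ↦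
    prod_pos fun i _ ↦ hc (i + 1)
  have hlog_prod : Tendsto (fun n : ℕ ↦ log (∏ i ∈ range n, c (i + 1) ω) / n) atTop
      (𝓝 (∫ ω, log (c 1 ω) ∂P)) := by
    simpa only [log_prod fun i _ ↦ (hc (i + 1)).ne'] using hslln
  have hnorm_near := abs_log_norm_prodDesc_sub_le fun k ↦ (hc k).le
  have hlog_norm :=
    (tendsto_log_sum_range_div hprod_pos hlog_prod).div_natCast_of_abs_sub_le hnorm_near
  rw [max_comm]
  simpa only [div_eq_inv_mul] using hlog_norm

/-- For an i.i.d. sequence `(c_k)_{k≥1}` of strictly positive random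
variables with `E[|ln c₁|] < ∞`, and `A_k` the matrix with rows `(c_k, 0)` and
`(c_k, 1)`, almost surely `(1/n)·ln‖A_n⋯A_1‖ → max(0, E[ln c₁])` (operator norm). -/
theorem stmt9 {Ω : Type*} [MeasurableSpace Ω] (P : Measure Ω) [IsProbabilityMeasure P]
    (c : ℕ → Ω → ℝ)
    (hmeas : ∀ k, Measurable (c k))
    (hpos : ∀ k, ∀ᵐ ω ∂P, 0 < c k ω)
    (hindep : iIndepFun c P)
    (hident : ∀ k, 1 ≤ k → Measure.map (c k) P = Measure.map (c 1) P)
    (hint : Integrable (fun ω => |Real.log (c 1 ω)|) P) :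
    ∀ᵐ ω ∂P,
      Tendsto
        (fun n : ℕ =>
          (n : ℝ)⁻¹ * Real.log ‖prodDesc (fun k => !![c k ω, 0; c k ω, 1]) n‖)
        atTop (nhds (max 0 (∫ ω, Real.log (c 1 ω) ∂P))) :=
  stmt9_general P c hmeas hpos hindep hident hint
end
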